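/- Let f : [0,1] → ℝ be twice continuously differentiable with f(0) = f(1) = 0 and f''(0) = f''(1) = 0. Then there exists a constant K > 0 (depending only on ‖f''‖_∞) such that for every x ∈ [0,1], the function t ↦ ∂u1/∂t(x,t) is Lebesgue integrable on [0,∞) and ∫_0^∞ |∂u1/∂t(x,t)| dt ≤ K + 2‖f‖_∞/(e^{π²} − 1). -/

import Mathlib

/-!
Integrating by parts twice, using `f 0 = f 1 = 0`, bounds the `n`-th sine coefficient of `f` by
`‖f''‖_∞ / (nπ)²`. The `n`-th term of `∂u1/∂t (x, ·)` is that coefficient times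
`n²π² e^{-n²π² t} sin(nπx)`, whose `L¹(0, ∞)` norm is at most `‖f''‖_∞ / (nπ)²`. These norms sum
to `‖f''‖_∞ / 6` by `ζ(2) = π²/6`, so the series is integrable term by term and
`∫_0^∞ |∂u1/∂t (x,t)| dt ≤ ‖f''‖_∞ / 3`.
-/

open MeasureTheory Set
open scoped Real

/-- The time derivative of `u1`:
`∂u1/∂t (x,t) = −2 Σ_{n=1}^∞ n²π² (∫_0^1 f(y) sin(nπy) dy) e^{−n²π²t} sin(nπx)`. -/
noncomputable def du1dt (f : ℝ → ℝ) (x t : ℝ) : ℝ :=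
  -2 * ∑' n : ℕ,
    ((n : ℝ) + 1) ^ 2 * π ^ 2 *
      (∫ y in (0:ℝ)..1, f y * Real.sin (((n : ℝ) + 1) * π * y)) *
        Real.exp (-(((n : ℝ) + 1) ^ 2) * π ^ 2 * t) * Real.sin (((n : ℝ) + 1) * π * x)

namespace MeasureTheory

variable {α E ι : Type*} [MeasurableSpace α] {μ : Measure α} [NormedAddCommGroup E] {F : ι → α → E}

theorem tsum_lintegral_enorm_eq_ofReal (hF_int : ∀ i, Integrable (F i) μ)
    (hF_sum : Summable fun i ↦ ∫ a, ‖F i a‖ ∂μ) :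
    ∑' i, ∫⁻ a, ‖F i a‖ₑ ∂μ = ENNReal.ofReal (∑' i, ∫ a, ‖F i a‖ ∂μ) := by
  rw [ENNReal.ofReal_tsum_of_nonneg (fun i ↦ integral_nonneg fun a ↦ norm_nonneg _) hF_sum]
  exact tsum_congr fun i ↦ (ofReal_integral_norm_eq_lintegral_enorm (hF_int i)).symm

variable [Countable ι]

theorem lintegral_enorm_tsum_le (hF : ∀ i, AEStronglyMeasurable (F i) μ) :
    ∫⁻ a, ‖∑' i, F i a‖ₑ ∂μ ≤ ∑' i, ∫⁻ a, ‖F i a‖ₑ ∂μ :=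
  (lintegral_mono fun _ ↦ enorm_tsum_le_tsum_enorm).trans_eq
    (lintegral_tsum fun i ↦ (hF i).enorm)

variable [MeasurableSpace E] [BorelSpace E] [SecondCountableTopology E] [CompleteSpace E]

theorem integrable_tsum_of_summable_integral_norm (hF_int : ∀ i, Integrable (F i) μ)
    (hF_sum : Summable fun i ↦ ∫ a, ‖F i a‖ ∂μ) :
    Integrable (fun a ↦ ∑' i, F i a) μ := by
  refine ⟨(AEMeasurable.tsum fun i ↦ (hF_int i).aemeasurable).aestronglyMeasurable, ?_⟩
  calc ∫⁻ a, ‖∑' i, F i a‖ₑ ∂μ ≤ ∑' i, ∫⁻ a, ‖F i a‖ₑ ∂μ :=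
        lintegral_enorm_tsum_le fun i ↦ (hF_int i).1
    _ < ⊤ := by rw [tsum_lintegral_enorm_eq_ofReal hF_int hF_sum]; exact ENNReal.ofReal_lt_top

theorem integral_norm_tsum_le_of_summable_integral_norm (hF_int : ∀ i, Integrable (F i) μ)
    (hF_sum : Summable fun i ↦ ∫ a, ‖F i a‖ ∂μ) :
    ∫ a, ‖∑' i, F i a‖ ∂μ ≤ ∑' i, ∫ a, ‖F i a‖ ∂μ := by
  rw [integral_norm_eq_lintegral_enorm (integrable_tsum_of_summable_integral_norm hF_int hF_sum).1,
    ← ENNReal.toReal_ofReal (tsum_nonneg fun i ↦ integral_nonneg fun a ↦ norm_nonneg (F i a)),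
    ← tsum_lintegral_enorm_eq_ofReal hF_int hF_sum]
  exact ENNReal.toReal_mono (tsum_lintegral_enorm_eq_ofReal hF_int hF_sum ▸ ENNReal.ofReal_ne_top)
    (lintegral_enorm_tsum_le fun i ↦ (hF_int i).1)

end MeasureTheory

section SineCoefficients

open Real

variable {f : ℝ → ℝ} {a b s : ℝ}

theorem ContDiffOn.hasDerivAt_derivWithin_Icc {n : WithTop ℕ∞} (hf : ContDiffOn ℝ n f (Icc a b))
    (hn : n ≠ 0) {x : ℝ} (hx : x ∈ Ioo a b) : HasDerivAt f (derivWithin f (Icc a b) x) x :=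
  ((hf.differentiableOn hn x (Ioo_subset_Icc_self hx)).hasDerivWithinAt).hasDerivAt
    (Icc_mem_nhds hx.1 hx.2)

theorem sq_mul_integral_mul_sin_eq_neg (hab : a < b) (hf : ContDiffOn ℝ 2 f (Icc a b))
    (hfa : f a = 0) (hfb : f b = 0) (hsa : sin (s * a) = 0) (hsb : sin (s * b) = 0) :
    s ^ 2 * ∫ y in a..b, f y * sin (s * y) =
      -∫ y in a..b, derivWithin (derivWithin f (Icc a b)) (Icc a b) y * sin (s * y) := by
  set f' := derivWithin f (Icc a b)
  set f'' := derivWithin f' (Icc a b)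
  have hud : UniqueDiffOn ℝ (Icc a b) := uniqueDiffOn_Icc hab
  have hf' : ContDiffOn ℝ 1 f' (Icc a b) := hf.derivWithin hud (by norm_num)
  have hf''_cont : ContinuousOn f'' (Icc a b) := hf'.continuousOn_derivWithin hud le_rfl
  -- both integrations by parts at once: `H` vanishes at `a` and `b`
  set H : ℝ → ℝ := fun y ↦ f' y * sin (s * y) - s * f y * cos (s * y)
  have hH : ∀ y ∈ Ioo a b,
      HasDerivAt H (s ^ 2 * (f y * sin (s * y)) + f'' y * sin (s * y)) y := by
    intro y hy
    have hsy : HasDerivAt (fun y ↦ s * y) s y := by simpa using (hasDerivAt_id y).const_mul s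
    exact (((hf'.hasDerivAt_derivWithin_Icc one_ne_zero hy).mul hsy.sin).sub
      (((hf.hasDerivAt_derivWithin_Icc two_ne_zero hy).const_mul s).mul hsy.cos)).congr_deriv
      (by ring)
  have hH_cont : ContinuousOn H (Icc a b) := by
    have := hf'.continuousOn; have := hf.continuousOn; fun_prop
  have hint : ∀ {g : ℝ → ℝ}, ContinuousOn g (Icc a b) →
      IntervalIntegrable (fun y ↦ g y * sin (s * y)) volume a b := fun hg ↦
    (hg.mul (by fun_prop)).intervalIntegrable_of_Icc hab.le
  have hFTC := intervalIntegral.integral_eq_sub_of_hasDerivAt_of_le hab.le hH_cont hH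
    (((hint hf.continuousOn).const_mul _).add (hint hf''_cont))
  rw [intervalIntegral.integral_add ((hint hf.continuousOn).const_mul _) (hint hf''_cont),
    intervalIntegral.integral_const_mul] at hFTC
  simp only [H, hfa, hfb, hsa, hsb] at hFTC
  linarith

theorem abs_integral_mul_sin_le (hab : a < b) (hf : ContDiffOn ℝ 2 f (Icc a b))
    (hfa : f a = 0) (hfb : f b = 0) (hsa : sin (s * a) = 0) (hsb : sin (s * b) = 0) (hs : s ≠ 0)
    {M : ℝ} (hM : ∀ y ∈ Icc a b, |derivWithin (derivWithin f (Icc a b)) (Icc a b) y| ≤ M) :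
    |∫ y in a..b, f y * sin (s * y)| ≤ M * (b - a) / s ^ 2 := by
  rw [le_div_iff₀ (by positivity), ← abs_of_pos (by positivity : 0 < s ^ 2), ← abs_mul, mul_comm,
    sq_mul_integral_mul_sin_eq_neg hab hf hfa hfb hsa hsb, abs_neg, ← abs_of_pos (sub_pos.2 hab)]
  refine intervalIntegral.norm_integral_le_of_norm_le_const
    (f := fun y ↦ derivWithin (derivWithin f (Icc a b)) (Icc a b) y * sin (s * y)) fun y hy ↦ ?_
  rw [uIoc_of_le hab.le] at hy
  rw [norm_mul, Real.norm_eq_abs, Real.norm_eq_abs]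
  exact (mul_le_of_le_one_right (abs_nonneg _) (abs_sin_le_one _)).trans
    (hM y (Ioc_subset_Icc_self hy))

theorem abs_integral_mul_sin_succ_mul_pi_le {f : ℝ → ℝ} (hf : ContDiffOn ℝ 2 f (Icc 0 1))
    (hf0 : f 0 = 0) (hf1 : f 1 = 0) {M : ℝ}
    (hM : ∀ y ∈ Icc (0 : ℝ) 1, |derivWithin (derivWithin f (Icc 0 1)) (Icc 0 1) y| ≤ M) (n : ℕ) :
    |∫ y in (0 : ℝ)..1, f y * sin (((n : ℝ) + 1) * π * y)| ≤ M * (1 / (((n : ℝ) + 1) * π) ^ 2) := by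
  have hsin : sin (((n : ℝ) + 1) * π * 1) = 0 := by
    simpa using sin_nat_mul_pi (n + 1)
  exact (abs_integral_mul_sin_le zero_lt_one hf hf0 hf1 (by simp) hsin (by positivity) hM).trans_eq
    (by ring)

end SineCoefficients

section HeatModes

open Real

theorem integrableOn_Ioi_mul_exp_neg_mul (A : ℝ) {c : ℝ} (hc : 0 < c) :
    IntegrableOn (fun t ↦ A * exp (-c * t)) (Ioi 0) :=
  (exp_neg_integrableOn_Ioi 0 hc).const_mul A

theorem integral_Ioi_norm_mul_exp_neg_mul (A : ℝ) {c : ℝ} (hc : 0 < c) :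
    ∫ t in Ioi 0, ‖A * exp (-c * t)‖ = |A| / c := by
  simp_rw [norm_mul, Real.norm_eq_abs, abs_exp]
  rw [integral_const_mul, integral_exp_mul_Ioi (neg_lt_zero.2 hc)]
  field_simp
  simp

theorem hasSum_one_div_succ_mul_pi_sq :
    HasSum (fun n : ℕ ↦ 1 / (((n : ℝ) + 1) * π) ^ 2) (1 / 6) := by
  have h := ((hasSum_nat_add_iff' 1).2 hasSum_zeta_two).div_const (π ^ 2)
  rw [Finset.sum_range_one, Nat.cast_zero, zero_pow two_ne_zero, div_zero, sub_zero,
    div_div_cancel_left' (by positivity), ← one_div] at h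
  refine h.congr_fun fun n ↦ ?_
  push_cast
  rw [mul_pow, div_div]

noncomputable def du1dtTerm (f : ℝ → ℝ) (x : ℝ) (n : ℕ) (t : ℝ) : ℝ :=
  (((n : ℝ) + 1) * π) ^ 2 * (∫ y in (0 : ℝ)..1, f y * sin (((n : ℝ) + 1) * π * y)) *
    sin (((n : ℝ) + 1) * π * x) * exp (-(((n : ℝ) + 1) * π) ^ 2 * t)

theorem du1dt_eq_tsum (f : ℝ → ℝ) (x t : ℝ) : du1dt f x t = -2 * ∑' n, du1dtTerm f x n t := by
  simp only [du1dt, du1dtTerm]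
  congr 2 with n
  ring_nf

theorem integrableOn_du1dtTerm (f : ℝ → ℝ) (x : ℝ) (n : ℕ) :
    IntegrableOn (du1dtTerm f x n) (Ioi 0) :=
  integrableOn_Ioi_mul_exp_neg_mul _ (by positivity)

variable {f : ℝ → ℝ} {M : ℝ} (hf : ContDiffOn ℝ 2 f (Icc 0 1)) (hf0 : f 0 = 0) (hf1 : f 1 = 0)
  (hM : ∀ y ∈ Icc (0 : ℝ) 1, |derivWithin (derivWithin f (Icc 0 1)) (Icc 0 1) y| ≤ M)
include hf hf0 hf1 hM

theorem integral_norm_du1dtTerm_le (x : ℝ) (n : ℕ) :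
    ∫ t in Ioi 0, ‖du1dtTerm f x n t‖ ≤ M * (1 / (((n : ℝ) + 1) * π) ^ 2) := by
  have hc : 0 < (((n : ℝ) + 1) * π) ^ 2 := by positivity
  unfold du1dtTerm
  rw [integral_Ioi_norm_mul_exp_neg_mul _ hc, abs_mul, abs_mul, abs_of_pos hc,
    mul_assoc, mul_div_cancel_left₀ _ hc.ne']
  exact (mul_le_of_le_one_right (abs_nonneg _) (abs_sin_le_one _)).trans
    (abs_integral_mul_sin_succ_mul_pi_le hf hf0 hf1 hM n)

theorem integrableOn_du1dt_and_integral_abs_le (x : ℝ) :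
    IntegrableOn (du1dt f x) (Ioi 0) ∧ ∫ t in Ioi 0, |du1dt f x t| ≤ M / 3 := by
  have hsum : HasSum (fun n : ℕ ↦ M * (1 / (((n : ℝ) + 1) * π) ^ 2)) (M / 6) := by
    simpa [div_eq_mul_one_div M] using hasSum_one_div_succ_mul_pi_sq.mul_left M
  have hsummable : Summable fun n ↦ ∫ t in Ioi 0, ‖du1dtTerm f x n t‖ :=
    hsum.summable.of_nonneg_of_le (fun n ↦ integral_nonneg fun _ ↦ norm_nonneg _)
      (integral_norm_du1dtTerm_le hf hf0 hf1 hM x)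
  have hdu : du1dt f x = fun t ↦ -2 * ∑' n, du1dtTerm f x n t := funext (du1dt_eq_tsum f x)
  refine ⟨hdu ▸ (integrable_tsum_of_summable_integral_norm (integrableOn_du1dtTerm f x)
    hsummable).const_mul (-2), ?_⟩
  calc ∫ t in Ioi 0, |du1dt f x t| = 2 * ∫ t in Ioi 0, ‖∑' n, du1dtTerm f x n t‖ := by
        simp_rw [hdu, abs_mul, Real.norm_eq_abs, ← integral_const_mul]
        norm_num
    _ ≤ 2 * (M / 6) := by
        gcongr
        exact (integral_norm_tsum_le_of_summable_integral_norm (integrableOn_du1dtTerm f x)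
          hsummable).trans
          (hasSum_le (integral_norm_du1dtTerm_le hf hf0 hf1 hM x) hsummable.hasSum hsum)
    _ = M / 3 := by ring

end HeatModes

theorem du1dt_integrable_and_bound_general
    (f : ℝ → ℝ) (hf : ContDiffOn ℝ 2 f (Set.Icc 0 1))
    (hf0 : f 0 = 0) (hf1 : f 1 = 0) :
    ∃ K > (0 : ℝ), ∀ x ∈ Set.Icc (0 : ℝ) 1,
      IntegrableOn (fun t : ℝ => du1dt f x t) (Set.Ici 0) ∧
        ∫ t in Set.Ici (0 : ℝ), |du1dt f x t|
          ≤ K + 2 * (⨆ y : Set.Icc (0 : ℝ) 1, |f y|) / (Real.exp (π ^ 2) - 1) := by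
  have hud : UniqueDiffOn ℝ (Icc (0 : ℝ) 1) := uniqueDiffOn_Icc zero_lt_one
  obtain ⟨M, hM⟩ := isCompact_Icc.exists_bound_of_continuousOn
    ((hf.derivWithin hud (m := 1) le_rfl).continuousOn_derivWithin hud le_rfl)
  simp only [Real.norm_eq_abs] at hM
  have hM0 : 0 ≤ M := (abs_nonneg _).trans (hM 0 ⟨le_rfl, zero_le_one⟩)
  have hsup : 0 ≤ 2 * (⨆ y : Icc (0 : ℝ) 1, |f y|) / (Real.exp (π ^ 2) - 1) :=
    div_nonneg (mul_nonneg zero_le_two (Real.iSup_nonneg fun _ ↦ abs_nonneg _))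
      (sub_nonneg.2 (Real.one_le_exp (sq_nonneg π)))
  refine ⟨M / 3 + 1, by positivity, fun x _ ↦ ?_⟩
  obtain ⟨hint, hbound⟩ := integrableOn_du1dt_and_integral_abs_le hf hf0 hf1 hM x
  rw [integrableOn_Ici_iff_integrableOn_Ioi, integral_Ici_eq_integral_Ioi]
  exact ⟨hint, by linarith⟩

/-- If `f : [0,1] → ℝ` is twice continuously differentiable with
`f 0 = f 1 = 0` and `f'' 0 = f'' 1 = 0`, then there is a constant `K > 0`
(depending only on `‖f''‖_∞`) such that for every `x ∈ [0,1]` the function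
`t ↦ ∂u1/∂t (x,t)` is Lebesgue integrable on `[0,∞)` and
`∫_0^∞ |∂u1/∂t (x,t)| dt ≤ K + 2‖f‖_∞/(e^{π²} − 1)`. -/
theorem du1dt_integrable_and_bound
    (f : ℝ → ℝ) (hf : ContDiffOn ℝ 2 f (Set.Icc 0 1))
    (hf0 : f 0 = 0) (hf1 : f 1 = 0)
    (hf''0 : derivWithin (derivWithin f (Set.Icc 0 1)) (Set.Icc 0 1) 0 = 0)
    (hf''1 : derivWithin (derivWithin f (Set.Icc 0 1)) (Set.Icc 0 1) 1 = 0) :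
    ∃ K > (0 : ℝ), ∀ x ∈ Set.Icc (0 : ℝ) 1,
      IntegrableOn (fun t : ℝ => du1dt f x t) (Set.Ici 0) ∧
        ∫ t in Set.Ici (0 : ℝ), |du1dt f x t|
          ≤ K + 2 * (⨆ y : Set.Icc (0 : ℝ) 1, |f y|) / (Real.exp (π ^ 2) - 1) :=
  du1dt_integrable_and_bound_general f hf hf0 hf1
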